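/- arXiv:0806.2546 — 2 statements merged into one kernel-verified Lean document; each statement's English description precedes it below -/
import Mathlib

section
/- For a multi-index β ∈ ℕ^n and the coefficients a_{2γ} = (−1)^{|γ|}/(γ! 4^{|γ|}) (a_δ = 0 if δ has an odd component), one has the identity ∑_{α ≤ β} (a_{β−α}/α!) x^α = (1/(β! 2^{|β|})) H_β(x), where H_β is the n-dimensional Hermite polynomial. -/
open scoped BigOperators
open MeasureTheory

noncomputable def pd {n : ℕ} (i : Fin n) (f : (Fin n → ℝ) → ℝ) : (Fin n → ℝ) → ℝ :=
  fun x => fderiv ℝ f x (Pi.single i 1)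

noncomputable def mderiv {n : ℕ} (α : Fin n → ℕ) (f : (Fin n → ℝ) → ℝ) : (Fin n → ℝ) → ℝ :=
  ((List.ofFn fun i : Fin n => (pd i)^[α i]).foldr (· ∘ ·) id) f

def mfact {n : ℕ} (α : Fin n → ℕ) : ℕ := ∏ i, (α i).factorial

def msize {n : ℕ} (α : Fin n → ℕ) : ℕ := ∑ i, α i

def mpow {n : ℕ} (x : Fin n → ℝ) (α : Fin n → ℕ) : ℝ := ∏ i, x i ^ α i

/-- Physicists' Hermite polynomial `H_k(x) = (−1)^k e^{x²} (d/dx)^k e^{-x²}`. -/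
noncomputable def Hphys (k : ℕ) (x : ℝ) : ℝ :=
  (-1 : ℝ) ^ k * Real.exp (x ^ 2) * iteratedDeriv k (fun t => Real.exp (-t ^ 2)) x

/-- The coefficients `a_{2γ} = (−1)^{|γ|}/(γ! 4^{|γ|})`, and `a_δ = 0` if `δ` has an
odd component. -/
noncomputable def aa {n : ℕ} (δ : Fin n → ℕ) : ℝ :=
  if ∀ i, Even (δ i) then
    (-1 : ℝ) ^ (∑ i, δ i / 2) /
      ((mfact (fun i => δ i / 2) : ℝ) * 4 ^ (∑ i, δ i / 2))
  else 0

/-! Both sides factor over the coordinates, so only `n = 1` needs work. There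
`H_k(x) = 2^{k/2} He_k(√2 x)`, where `He_k = Polynomial.hermite k` is the probabilists' Hermite
polynomial, because `e^{-x²}` is the Gaussian `e^{-y²/2}` at `y = √2 x`. The coefficients of
`He_k` are explicit (`coeff_hermite_explicit`), and `(2m)! = 2^m m! (2m-1)‼` turns those of
`H_k / (k! 2^k)` into `a_{k-a} / a!`. -/

open Polynomial
open scoped Nat

theorem Nat.factorial_two_mul_eq_mul_doubleFactorial (m : ℕ) :
    (2 * m)! = 2 ^ m * m ! * (2 * m - 1)‼ := by
  cases m with
  | zero => rfl
  | succ j =>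
    rw [show 2 * (j + 1) = 2 * j + 1 + 1 by ring, Nat.factorial_eq_mul_doubleFactorial,
      show 2 * j + 1 + 1 = 2 * (j + 1) by ring, Nat.doubleFactorial_two_mul]
    rfl

theorem Finset.sum_Iic_pi_prod_eq_prod_sum {ι : Type*} {α : ι → Type*} [Fintype ι]
    [DecidableEq ι] [∀ i, DecidableEq (α i)] [∀ i, PartialOrder (α i)]
    [∀ i, LocallyFiniteOrderBot (α i)] {R : Type*} [CommSemiring R] (b : ∀ i, α i)
    (f : ∀ i, α i → R) : ∑ x ∈ Iic b, ∏ i, f i (x i) = ∏ i, ∑ a ∈ Iic (b i), f i a :=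
  (prod_univ_sum (fun i => Iic (b i)) f).symm

theorem Hphys_eq_aeval_hermite (k : ℕ) (x : ℝ) :
    Hphys k x = √2 ^ k * aeval (√2 * x) (hermite k) := by
  have hgauss : (fun t : ℝ => Real.exp (-t ^ 2)) =
      fun t => (fun y => Real.exp (-(y ^ 2 / 2))) (√2 * t) := by
    ext t; simp only [mul_pow, Real.sq_sqrt zero_le_two]; ring_nf
  have hsmooth : ContDiff ℝ k fun y : ℝ => Real.exp (-(y ^ 2 / 2)) := by fun_prop
  rw [Hphys, hgauss, iteratedDeriv_comp_const_mul hsmooth, iteratedDeriv_eq_iterate]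
  simp only
  rw [deriv_gaussian_eq_hermite_mul_gaussian]
  have hexp : Real.exp (x ^ 2) * Real.exp (-((√2 * x) ^ 2 / 2)) = 1 := by
    rw [← Real.exp_add, mul_pow, Real.sq_sqrt zero_le_two]; simp
  have hsign : (-1 : ℝ) ^ k * (-1) ^ k = 1 := by rw [← mul_pow]; norm_num
  calc (-1) ^ k * Real.exp (x ^ 2) *
        (√2 ^ k * ((-1) ^ k * aeval (√2 * x) (hermite k) * Real.exp (-((√2 * x) ^ 2 / 2))))
      = ((-1) ^ k * (-1) ^ k) * (Real.exp (x ^ 2) * Real.exp (-((√2 * x) ^ 2 / 2))) *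
          (√2 ^ k * aeval (√2 * x) (hermite k)) := by ring
    _ = √2 ^ k * aeval (√2 * x) (hermite k) := by rw [hsign, hexp, one_mul, one_mul]

noncomputable def aa₁ (k : ℕ) : ℝ :=
  if Even k then (-1 : ℝ) ^ (k / 2) / ((k / 2)! * 4 ^ (k / 2)) else 0

theorem aa₁_two_mul (m : ℕ) : aa₁ (2 * m) = (-1 : ℝ) ^ m / (m ! * 4 ^ m) := by
  simp [aa₁]

theorem aa₁_of_odd {k : ℕ} (hk : Odd k) : aa₁ k = 0 := by
  simp [aa₁, Nat.not_even_iff_odd.mpr hk]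

theorem aa_eq_prod_aa₁ {n : ℕ} (δ : Fin n → ℕ) : aa δ = ∏ i, aa₁ (δ i) := by
  by_cases h : ∀ i, Even (δ i)
  · rw [aa, if_pos h]
    simp only [aa₁, h, if_true, mfact, Finset.prod_div_distrib, Finset.prod_mul_distrib,
      Finset.prod_pow_eq_pow_sum, Nat.cast_prod]
  · obtain ⟨i, hi⟩ := not_forall.mp h
    rw [aa, if_neg h, Finset.prod_eq_zero (Finset.mem_univ i) (by simp [aa₁, hi])]

theorem sqrt_two_pow_mul_coeff_hermite {k a : ℕ} (hak : a ≤ k) :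
    √2 ^ k * ((hermite k).coeff a : ℝ) * √2 ^ a = k ! * 2 ^ k * aa₁ (k - a) / a ! := by
  rcases Nat.even_or_odd (k - a) with ⟨m, hm⟩ | hodd
  · obtain rfl : k = 2 * m + a := by omega
    have hsqrt : √2 ^ (2 * m + a) * √2 ^ a = 2 ^ (m + a) := by
      rw [← pow_add, show 2 * m + a + a = 2 * (m + a) by ring, pow_mul, Real.sq_sqrt zero_le_two]
    have hfact := Nat.factorial_two_mul_eq_mul_doubleFactorial m
    have hchoose := Nat.choose_mul_factorial_mul_factorial (Nat.le_add_left a (2 * m))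
    rw [Nat.add_sub_cancel] at hchoose ⊢
    rw [coeff_hermite_explicit, aa₁_two_mul, mul_right_comm, hsqrt]
    have : (a ! : ℝ) ≠ 0 := by positivity
    have : (m ! : ℝ) ≠ 0 := by positivity
    have : ((2 * m - 1)‼ : ℝ) ≠ 0 := by positivity
    rw [← Nat.cast_inj (R := ℝ)] at hfact hchoose
    push_cast at hfact hchoose ⊢
    rw [← hchoose, hfact, show (4 : ℝ) ^ m = 2 ^ m * 2 ^ m by rw [← mul_pow]; norm_num]
    field_simp
    ring
  · rw [coeff_hermite_of_odd_add (by
      rw [show k + a = (k - a) + 2 * a by omega]; exact hodd.add_even (even_two_mul a)),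
      aa₁_of_odd hodd]
    simp

theorem sum_aa₁_div_factorial_mul_pow (k : ℕ) (x : ℝ) :
    ∑ a ∈ Finset.Iic k, aa₁ (k - a) / a ! * x ^ a = 1 / (k ! * 2 ^ k) * Hphys k x := by
  rw [Hphys_eq_aeval_hermite, aeval_eq_sum_range, natDegree_hermite, Nat.range_succ_eq_Iic,
    Finset.mul_sum, Finset.mul_sum]
  refine Finset.sum_congr rfl fun a ha => ?_
  have hcoeff := sqrt_two_pow_mul_coeff_hermite (Finset.mem_Iic.mp ha)
  have : (k ! : ℝ) ≠ 0 := by positivity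
  calc aa₁ (k - a) / a ! * x ^ a
      = 1 / (k ! * 2 ^ k) * (k ! * 2 ^ k * aa₁ (k - a) / a !) * x ^ a := by field_simp
    _ = 1 / (k ! * 2 ^ k) * (√2 ^ k * ((hermite k).coeff a • (√2 * x) ^ a)) := by
      rw [← hcoeff, zsmul_eq_mul, mul_pow]; ring

theorem coeff_sum_eq_hermite (n : ℕ) (β : Fin n → ℕ) (x : Fin n → ℝ) :
    ∑ α ∈ Finset.Iic β, (aa (β - α) / (mfact α : ℝ)) * mpow x α
      = (1 / ((mfact β : ℝ) * 2 ^ msize β)) * ∏ j, Hphys (β j) (x j) := by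
  have hterm (α : Fin n → ℕ) : aa (β - α) / (mfact α : ℝ) * mpow x α
      = ∏ i, aa₁ (β i - α i) / (α i)! * x i ^ α i := by
    rw [aa_eq_prod_aa₁, mfact, mpow, Nat.cast_prod, ← Finset.prod_div_distrib,
      ← Finset.prod_mul_distrib]
    rfl
  rw [Finset.sum_congr rfl fun α _ => hterm α,
    Finset.sum_Iic_pi_prod_eq_prod_sum β fun i a => aa₁ (β i - a) / a ! * x i ^ a]
  simp only [sum_aa₁_div_factorial_mul_pow, Finset.prod_mul_distrib]
  congr 1
  simp only [mfact, msize, Nat.cast_prod, one_div, Finset.prod_inv_distrib, Finset.prod_mul_distrib,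
    Finset.prod_pow_eq_pow_sum]
end

section
/- For every natural number k ≥ 2, Γ((k+1)/2) ≤ (π^{1/4}/2^{k/2}) √(k!). -/
/-!
Legendre's duplication formula gives `Γ(s) Γ(s + 1/2) = 2^(1-2s) √π Γ(2s)`, and for `s ≥ 3/2`
we have `Γ(s) ≤ Γ(s + 1/2)`: by convexity `Γ ≤ 1` on `[1, 2]`, while `Γ` is increasing and `≥ 1`
on `[2, ∞)`. Hence `Γ(s)² ≤ 2^(1-2s) √π Γ(2s)`; take `s = (k+1)/2` and square roots.
-/

open Real Set

namespace Real

theorem Gamma_le_one_of_mem_Icc {s : ℝ} (hs : s ∈ Icc 1 2) : Gamma s ≤ 1 := by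
  have h := convexOn_Gamma.le_on_segment (mem_Ioi.2 one_pos) (mem_Ioi.2 two_pos)
    (by rwa [segment_eq_Icc one_le_two])
  rwa [Gamma_one, Gamma_two, max_self] at h

theorem one_le_Gamma_of_two_le {s : ℝ} (hs : 2 ≤ s) : 1 ≤ Gamma s :=
  Gamma_two ▸ Gamma_strictMonoOn_Ici.monotoneOn self_mem_Ici hs hs

theorem Gamma_le_Gamma_add_half {s : ℝ} (hs : 3 / 2 ≤ s) : Gamma s ≤ Gamma (s + 1 / 2) := by
  rcases lt_or_ge s 2 with hs2 | hs2
  · exact (Gamma_le_one_of_mem_Icc ⟨by linarith, hs2.le⟩).trans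
      (one_le_Gamma_of_two_le (by linarith))
  · exact Gamma_strictMonoOn_Ici.monotoneOn hs2 (by simp only [mem_Ici]; linarith) (by linarith)

theorem Gamma_sq_le_Gamma_two_mul {s : ℝ} (hs : 3 / 2 ≤ s) :
    Gamma s ^ 2 ≤ Gamma (2 * s) * 2 ^ (1 - 2 * s) * √π := by
  rw [← Gamma_mul_Gamma_add_half, sq]
  exact mul_le_mul_of_nonneg_left (Gamma_le_Gamma_add_half hs)
    (Gamma_pos_of_pos (by linarith)).le

end Real

theorem gamma_factorial_bound (k : ℕ) (hk : 2 ≤ k) :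
    Real.Gamma (((k : ℝ) + 1) / 2)
      ≤ Real.pi ^ ((1 : ℝ) / 4) / 2 ^ ((k : ℝ) / 2) * Real.sqrt k.factorial := by
  have hs : 3 / 2 ≤ ((k : ℝ) + 1) / 2 := by
    have : (2 : ℝ) ≤ k := by exact_mod_cast hk
    linarith
  have hsq := Real.Gamma_sq_le_Gamma_two_mul hs
  rw [show 2 * (((k : ℝ) + 1) / 2) = k + 1 by ring, show 1 - ((k : ℝ) + 1) = -k by ring,
    Real.Gamma_nat_eq_factorial] at hsq
  have hrhs : (π ^ ((1 : ℝ) / 4) / 2 ^ ((k : ℝ) / 2) * √k.factorial) ^ 2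
      = k.factorial * 2 ^ (-(k : ℝ)) * √π := by
    rw [div_mul_eq_mul_div, div_pow, mul_pow, Real.sq_sqrt (by positivity),
      ← Real.rpow_natCast, ← Real.rpow_natCast, ← Real.rpow_mul pi_pos.le,
      ← Real.rpow_mul zero_le_two, Real.rpow_neg zero_le_two, Real.sqrt_eq_rpow]
    push_cast
    ring_nf
  rw [← hrhs] at hsq
  exact (pow_le_pow_iff_left₀ (Real.Gamma_pos_of_pos (by linarith)).le (by positivity)
    two_ne_zero).1 hsq
end
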